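/- arXiv:2507.15645 — 7 statements merged into one kernel-verified Lean document; each statement's English description precedes it below -/
import Mathlib

section
/- Let ξ > 0, η > 0, θ ∈ ℝ, ρ₁ ∈ ℝ, and define u(x,t) = 2η(x − (1 − 2ξ)t) + ρ₁, ψ(x,t) = 2(η² − ξ²)t − 2ξ(x − t) + θ, n(x,t) = −4η²·sech²(u(x,t)) and φ(x,t) = 2η·√(2ξ)·sech(u(x,t))·e^{iψ(x,t)}. Then for every (x,t) ∈ ℝ², i·∂φ/∂t(x,t) + i·∂φ/∂x(x,t) + (1/2)·∂²φ/∂x²(x,t) − φ(x,t)·n(x,t) = 0. -/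
open Complex


lemma key (c m b p q : ℝ) (s : ℝ) :
    HasDerivAt (fun s : ℝ => ((c * (1 / Real.cosh (m * s + b)) : ℝ) : ℂ) *
        Complex.exp (Complex.I * ((p * s + q : ℝ) : ℂ)))
      ((c : ℂ) * Complex.exp (Complex.I * ((p * s + q : ℝ) : ℂ)) *
        (Complex.I * p * Complex.cosh ((m * s + b : ℝ) : ℂ) - m * Complex.sinh ((m * s + b : ℝ) : ℂ)) /
        Complex.cosh ((m * s + b : ℝ) : ℂ) ^ 2) s := by
  have hv : HasDerivAt (fun s : ℝ => ((m * s + b : ℝ) : ℂ)) (m : ℂ) s := by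
    have h : HasDerivAt (fun s : ℝ => m * s + b) m s := by
      simpa using ((hasDerivAt_id s).const_mul m).add_const b
    simpa using h.ofReal_comp
  have hw : HasDerivAt (fun s : ℝ => ((p * s + q : ℝ) : ℂ)) (p : ℂ) s := by
    have h : HasDerivAt (fun s : ℝ => p * s + q) p s := by
      simpa using ((hasDerivAt_id s).const_mul p).add_const q
    simpa using h.ofReal_comp
  have hC : HasDerivAt (fun s : ℝ => Complex.cosh ((m * s + b : ℝ) : ℂ))
      (Complex.sinh ((m * s + b : ℝ) : ℂ) * m) s :=
    (Complex.hasDerivAt_cosh _).comp s hv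
  have hE : HasDerivAt (fun s : ℝ => Complex.exp (Complex.I * ((p * s + q : ℝ) : ℂ)))
      (Complex.exp (Complex.I * ((p * s + q : ℝ) : ℂ)) * (Complex.I * p)) s :=
    (hw.const_mul Complex.I).cexp
  have hN : HasDerivAt (fun s : ℝ => (c : ℂ) * Complex.exp (Complex.I * ((p * s + q : ℝ) : ℂ)))
      ((c : ℂ) * (Complex.exp (Complex.I * ((p * s + q : ℝ) : ℂ)) * (Complex.I * p))) s :=
    hE.const_mul (c : ℂ)
  have hcne : Complex.cosh ((m * s + b : ℝ) : ℂ) ≠ 0 := by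
    rw [← Complex.ofReal_cosh]
    exact_mod_cast (Real.cosh_pos (x := m * s + b)).ne'
  have hD := hN.div hC hcne
  have heq : (fun s : ℝ => ((c * (1 / Real.cosh (m * s + b)) : ℝ) : ℂ) *
      Complex.exp (Complex.I * ((p * s + q : ℝ) : ℂ))) =
      (fun s : ℝ => (c : ℂ) * Complex.exp (Complex.I * ((p * s + q : ℝ) : ℂ)) /
        Complex.cosh ((m * s + b : ℝ) : ℂ)) := by
    funext y
    have hne : Complex.cosh ((m * y + b : ℝ) : ℂ) ≠ 0 := by
      rw [← Complex.ofReal_cosh]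
      exact_mod_cast (Real.cosh_pos (x := m * y + b)).ne'
    push_cast [Complex.ofReal_cosh]
    field_simp
  rw [heq]
  refine hD.congr_deriv ?_
  field_simp


lemma key2 (c m b p q : ℝ) (s : ℝ) :
    HasDerivAt (fun s : ℝ => (c : ℂ) * Complex.exp (Complex.I * ((p * s + q : ℝ) : ℂ)) *
        (Complex.I * p * Complex.cosh ((m * s + b : ℝ) : ℂ) - m * Complex.sinh ((m * s + b : ℝ) : ℂ)) /
        Complex.cosh ((m * s + b : ℝ) : ℂ) ^ 2)
      ((c : ℂ) * Complex.exp (Complex.I * ((p * s + q : ℝ) : ℂ)) *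
        ((-(p:ℂ) ^ 2 - (m:ℂ) ^ 2) * Complex.cosh ((m * s + b : ℝ) : ℂ) ^ 2
          - 2 * Complex.I * p * m * Complex.sinh ((m * s + b : ℝ) : ℂ) * Complex.cosh ((m * s + b : ℝ) : ℂ)
          + 2 * (m:ℂ) ^ 2 * Complex.sinh ((m * s + b : ℝ) : ℂ) ^ 2) /
        Complex.cosh ((m * s + b : ℝ) : ℂ) ^ 3) s := by
  have hv : HasDerivAt (fun s : ℝ => ((m * s + b : ℝ) : ℂ)) (m : ℂ) s := by
    have h : HasDerivAt (fun s : ℝ => m * s + b) m s := by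
      simpa using ((hasDerivAt_id s).const_mul m).add_const b
    simpa using h.ofReal_comp
  have hw : HasDerivAt (fun s : ℝ => ((p * s + q : ℝ) : ℂ)) (p : ℂ) s := by
    have h : HasDerivAt (fun s : ℝ => p * s + q) p s := by
      simpa using ((hasDerivAt_id s).const_mul p).add_const q
    simpa using h.ofReal_comp
  have hC : HasDerivAt (fun s : ℝ => Complex.cosh ((m * s + b : ℝ) : ℂ))
      (Complex.sinh ((m * s + b : ℝ) : ℂ) * m) s :=
    (Complex.hasDerivAt_cosh _).comp s hv
  have hS : HasDerivAt (fun s : ℝ => Complex.sinh ((m * s + b : ℝ) : ℂ))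
      (Complex.cosh ((m * s + b : ℝ) : ℂ) * m) s :=
    (Complex.hasDerivAt_sinh _).comp s hv
  have hE : HasDerivAt (fun s : ℝ => (c : ℂ) * Complex.exp (Complex.I * ((p * s + q : ℝ) : ℂ)))
      ((c : ℂ) * (Complex.exp (Complex.I * ((p * s + q : ℝ) : ℂ)) * (Complex.I * p))) s :=
    ((hw.const_mul Complex.I).cexp).const_mul (c : ℂ)
  have hcne : Complex.cosh ((m * s + b : ℝ) : ℂ) ≠ 0 := by
    rw [← Complex.ofReal_cosh]
    exact_mod_cast (Real.cosh_pos (x := m * s + b)).ne'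
  have hB : HasDerivAt (fun s : ℝ => Complex.I * (p:ℂ) * Complex.cosh ((m * s + b : ℝ) : ℂ)
      - (m:ℂ) * Complex.sinh ((m * s + b : ℝ) : ℂ))
      (Complex.I * (p:ℂ) * (Complex.sinh ((m * s + b : ℝ) : ℂ) * m)
        - (m:ℂ) * (Complex.cosh ((m * s + b : ℝ) : ℂ) * m)) s :=
    (hC.const_mul (Complex.I * (p:ℂ))).sub (hS.const_mul (m:ℂ))
  have hN := hE.mul hB
  have hD2 : HasDerivAt (fun s : ℝ => Complex.cosh ((m * s + b : ℝ) : ℂ) ^ 2)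
      (2 * Complex.cosh ((m * s + b : ℝ) : ℂ) * (Complex.sinh ((m * s + b : ℝ) : ℂ) * m)) s := by
    simp only [pow_two]
    refine (hC.mul hC).congr_deriv ?_
    ring
  have hfin := hN.div hD2 (pow_ne_zero 2 hcne)
  refine hfin.congr_deriv (Eq.symm ?_)
  simp only [Pi.mul_apply]
  have h1 : Complex.cosh ((m * s + b : ℝ) : ℂ) ^ 2 - Complex.sinh ((m * s + b : ℝ) : ℂ) ^ 2 = 1 :=
    Complex.cosh_sq_sub_sinh_sq _
  rw [div_eq_div_iff (pow_ne_zero 3 hcne) (pow_ne_zero 2 (pow_ne_zero 2 hcne))]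
  ring_nf
  simp only [Complex.I_sq]
  ring_nf


/-- The short-wave equation of the Yajima–Oikawa system,
`i φ_t + i φ_x + (1/2) φ_xx − φ n = 0`, is satisfied by the one-soliton solution
`n(x,t) = −4η² sech²(u(x,t))`, `φ(x,t) = 2η√(2ξ) sech(u(x,t)) e^{iψ(x,t)}` with
`u(x,t) = 2η(x−(1−2ξ)t)+ρ₁` and `ψ(x,t) = 2(η²−ξ²)t−2ξ(x−t)+θ`, for `ξ > 0`, `η > 0`. -/
theorem stmt_0 (ξ η θ ρ₁ : ℝ) (hξ : 0 < ξ) (hη : 0 < η)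
    (u ψ : ℝ → ℝ → ℝ) (n : ℝ → ℝ → ℝ) (φ : ℝ → ℝ → ℂ)
    (hu : ∀ x t, u x t = 2 * η * (x - (1 - 2 * ξ) * t) + ρ₁)
    (hψ : ∀ x t, ψ x t = 2 * (η ^ 2 - ξ ^ 2) * t - 2 * ξ * (x - t) + θ)
    (hn : ∀ x t, n x t = -4 * η ^ 2 * (1 / Real.cosh (u x t)) ^ 2)
    (hφ : ∀ x t, φ x t =
      ((2 * η * Real.sqrt (2 * ξ) * (1 / Real.cosh (u x t)) : ℝ) : ℂ) *
        Complex.exp (Complex.I * ((ψ x t : ℝ) : ℂ)))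
    (x t : ℝ) :
    Complex.I * deriv (fun τ => φ x τ) t + Complex.I * deriv (fun y => φ y t) x +
      (1 / 2) * deriv (deriv (fun y => φ y t)) x - φ x t * ((n x t : ℝ) : ℂ) = 0 := by
  set c : ℝ := 2 * η * Real.sqrt (2 * ξ) with hc
  -- affine parameters
  set mx : ℝ := 2 * η with hmx
  set bx : ℝ := 2 * η * (-((1 - 2 * ξ) * t)) + ρ₁ with hbx
  set px : ℝ := -(2 * ξ) with hpx
  set qx : ℝ := 2 * (η ^ 2 - ξ ^ 2) * t + 2 * ξ * t + θ with hqx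
  set mt : ℝ := -(2 * η * (1 - 2 * ξ)) with hmt
  set bt : ℝ := 2 * η * x + ρ₁ with hbt
  set pt : ℝ := 2 * (η ^ 2 - ξ ^ 2) + 2 * ξ with hpt
  set qt : ℝ := -(2 * ξ) * x + θ with hqt
  have ex : (fun y => φ y t) = (fun y : ℝ =>
      ((c * (1 / Real.cosh (mx * y + bx)) : ℝ) : ℂ) *
        Complex.exp (Complex.I * ((px * y + qx : ℝ) : ℂ))) := by
    funext y
    rw [hφ, hu, hψ,
      show 2 * η * (y - (1 - 2 * ξ) * t) + ρ₁ = mx * y + bx from by rw [hmx, hbx]; ring,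
      show 2 * (η ^ 2 - ξ ^ 2) * t - 2 * ξ * (y - t) + θ = px * y + qx from by
        rw [hpx, hqx]; ring]
  have et : (fun τ => φ x τ) = (fun τ : ℝ =>
      ((c * (1 / Real.cosh (mt * τ + bt)) : ℝ) : ℂ) *
        Complex.exp (Complex.I * ((pt * τ + qt : ℝ) : ℂ))) := by
    funext τ
    rw [hφ, hu, hψ,
      show 2 * η * (x - (1 - 2 * ξ) * τ) + ρ₁ = mt * τ + bt from by rw [hmt, hbt]; ring,
      show 2 * (η ^ 2 - ξ ^ 2) * τ - 2 * ξ * (x - τ) + θ = pt * τ + qt from by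
        rw [hpt, hqt]; ring]
  have hux : (mx * x + bx : ℝ) = u x t := by rw [hu, hmx, hbx]; ring
  have hpsx : (px * x + qx : ℝ) = ψ x t := by rw [hψ, hpx, hqx]; ring
  have hut : (mt * t + bt : ℝ) = u x t := by rw [hu, hmt, hbt]; ring
  have hpst : (pt * t + qt : ℝ) = ψ x t := by rw [hψ, hpt, hqt]; ring
  have d1t : deriv (fun τ => φ x τ) t =
      (c : ℂ) * Complex.exp (Complex.I * ((ψ x t : ℝ) : ℂ)) *
        (Complex.I * pt * Complex.cosh ((u x t : ℝ) : ℂ) - mt * Complex.sinh ((u x t : ℝ) : ℂ)) /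
        Complex.cosh ((u x t : ℝ) : ℂ) ^ 2 := by
    rw [et, ← hut, ← hpst]
    exact (key c mt bt pt qt t).deriv
  have d1x : deriv (fun y => φ y t) x =
      (c : ℂ) * Complex.exp (Complex.I * ((ψ x t : ℝ) : ℂ)) *
        (Complex.I * px * Complex.cosh ((u x t : ℝ) : ℂ) - mx * Complex.sinh ((u x t : ℝ) : ℂ)) /
        Complex.cosh ((u x t : ℝ) : ℂ) ^ 2 := by
    rw [ex, ← hux, ← hpsx]
    exact (key c mx bx px qx x).deriv
  have dd : deriv (fun y => φ y t) = (fun y : ℝ =>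
      (c : ℂ) * Complex.exp (Complex.I * ((px * y + qx : ℝ) : ℂ)) *
        (Complex.I * px * Complex.cosh ((mx * y + bx : ℝ) : ℂ) -
          mx * Complex.sinh ((mx * y + bx : ℝ) : ℂ)) /
        Complex.cosh ((mx * y + bx : ℝ) : ℂ) ^ 2) := by
    funext y
    rw [ex]
    exact (key c mx bx px qx y).deriv
  have d2x : deriv (deriv (fun y => φ y t)) x =
      (c : ℂ) * Complex.exp (Complex.I * ((ψ x t : ℝ) : ℂ)) *
        ((-(px : ℂ) ^ 2 - (mx : ℂ) ^ 2) * Complex.cosh ((u x t : ℝ) : ℂ) ^ 2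
          - 2 * Complex.I * px * mx * Complex.sinh ((u x t : ℝ) : ℂ) *
            Complex.cosh ((u x t : ℝ) : ℂ)
          + 2 * (mx : ℂ) ^ 2 * Complex.sinh ((u x t : ℝ) : ℂ) ^ 2) /
        Complex.cosh ((u x t : ℝ) : ℂ) ^ 3 := by
    rw [dd, ← hux, ← hpsx]
    exact (key2 c mx bx px qx x).deriv
  rw [d1t, d1x, d2x, hφ, hn]
  have hcne : Complex.cosh ((u x t : ℝ) : ℂ) ≠ 0 := by
    rw [← Complex.ofReal_cosh]
    exact_mod_cast (Real.cosh_pos (x := u x t)).ne'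
  have h1 : Complex.cosh ((u x t : ℝ) : ℂ) ^ 2 - Complex.sinh ((u x t : ℝ) : ℂ) ^ 2 = 1 :=
    Complex.cosh_sq_sub_sinh_sq _
  have hI : (Complex.I : ℂ) ^ 2 = -1 := Complex.I_sq
  push_cast [Complex.ofReal_cosh]
  rw [hmx, hpx, hmt, hpt, hc]
  have hsq : ((Real.sqrt (2 * ξ) : ℝ) : ℂ) ^ 2 = 2 * ξ := by
    norm_cast
    rw [Real.sq_sqrt (by positivity)]
  field_simp
  push_cast
  linear_combination ((mx : ℂ) * ((Real.sqrt (2 * ξ) : ℝ) : ℂ) *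
    Complex.exp (Complex.I * ((ψ x t : ℝ) : ℂ))) * ((-8 * (η : ℂ) ^ 2) * h1 +
    (4 * ((η : ℂ) ^ 2 - (ξ : ℂ) ^ 2) * Complex.cosh ((u x t : ℝ) : ℂ) ^ 2) * hI)
end

section
/- Let ξ < 0, η > 0, θ ∈ ℝ, ρ₂ ∈ ℝ, and define u(x,t) = 2η(x − (1 − 2ξ)t) + ρ₂, ψ(x,t) = 2(η² − ξ²)t − 2ξ(x − t) + θ, n(x,t) = 4η²·csch²(u(x,t)) and φ(x,t) = 2η·√(−2ξ)·csch(u(x,t))·e^{iψ(x,t)}. Then at every point (x,t) ∈ ℝ² with u(x,t) ≠ 0, i·∂φ/∂t(x,t) + i·∂φ/∂x(x,t) + (1/2)·∂²φ/∂x²(x,t) − φ(x,t)·n(x,t) = 0. -/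
private lemma aff_hasDerivAt (a b y : ℝ) : HasDerivAt (fun z => a * z + b) a y := by
  simpa using ((hasDerivAt_id y).const_mul a).add_const b

/-- The short-wave equation of the Yajima–Oikawa system,
`i φ_t + i φ_x + (1/2) φ_xx − φ n = 0`, is satisfied by the one solitary wave solution
`n(x,t) = 4η² csch²(u(x,t))`, `φ(x,t) = 2η√(−2ξ) csch(u(x,t)) e^{iψ(x,t)}` with
`u(x,t) = 2η(x−(1−2ξ)t)+ρ₂` and `ψ(x,t) = 2(η²−ξ²)t−2ξ(x−t)+θ`, for `ξ < 0`, `η > 0`,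
at every point where `u(x,t) ≠ 0`. -/
theorem stmt_2 (ξ η θ ρ₂ : ℝ) (hξ : ξ < 0) (hη : 0 < η)
    (u ψ : ℝ → ℝ → ℝ) (n : ℝ → ℝ → ℝ) (φ : ℝ → ℝ → ℂ)
    (hu : ∀ x t, u x t = 2 * η * (x - (1 - 2 * ξ) * t) + ρ₂)
    (hψ : ∀ x t, ψ x t = 2 * (η ^ 2 - ξ ^ 2) * t - 2 * ξ * (x - t) + θ)
    (hn : ∀ x t, n x t = 4 * η ^ 2 * (1 / Real.sinh (u x t)) ^ 2)
    (hφ : ∀ x t, φ x t =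
      ((2 * η * Real.sqrt (-2 * ξ) * (1 / Real.sinh (u x t)) : ℝ) : ℂ) *
        Complex.exp (Complex.I * ((ψ x t : ℝ) : ℂ)))
    (x t : ℝ) (hu0 : u x t ≠ 0) :
    Complex.I * deriv (fun τ => φ x τ) t + Complex.I * deriv (fun y => φ y t) x +
      (1 / 2) * deriv (deriv (fun y => φ y t)) x - φ x t * ((n x t : ℝ) : ℂ) = 0 := by
  set A : ℝ := 2 * η * Real.sqrt (-2 * ξ) with hA
  -- derivatives of u and ψ in each variable
  have hudx : ∀ y : ℝ, HasDerivAt (fun y => u y t) (2 * η) y := by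
    intro y
    have h : (fun y => u y t) = fun z => (2 * η) * z + (ρ₂ - 2 * η * ((1 - 2 * ξ) * t)) := by
      funext z; rw [hu]; ring
    rw [h]; exact aff_hasDerivAt _ _ y
  have hudt : HasDerivAt (fun τ => u x τ) (-(2 * η * (1 - 2 * ξ))) t := by
    have h : (fun τ => u x τ) = fun z => (-(2 * η * (1 - 2 * ξ))) * z + (2 * η * x + ρ₂) := by
      funext z; rw [hu]; ring
    rw [h]; exact aff_hasDerivAt _ _ t
  have hψdx : ∀ y : ℝ, HasDerivAt (fun y => ψ y t) (-(2 * ξ)) y := by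
    intro y
    have h : (fun y => ψ y t) = fun z => (-(2 * ξ)) * z + (2 * (η ^ 2 - ξ ^ 2) * t + 2 * ξ * t + θ) := by
      funext z; rw [hψ]; ring
    rw [h]; exact aff_hasDerivAt _ _ y
  have hψdt : HasDerivAt (fun τ => ψ x τ) (2 * (η ^ 2 - ξ ^ 2) + 2 * ξ) t := by
    have h : (fun τ => ψ x τ) = fun z => (2 * (η ^ 2 - ξ ^ 2) + 2 * ξ) * z + (-(2 * ξ * x) + θ) := by
      funext z; rw [hψ]; ring
    rw [h]; exact aff_hasDerivAt _ _ t
  -- nonvanishing of sinh near x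
  have hs0 : Real.sinh (u x t) ≠ 0 := fun h => hu0 (Real.sinh_eq_zero.mp h)
  have hucont : Continuous fun y => u y t := by
    have h : (fun y => u y t) = fun y => 2 * η * (y - (1 - 2 * ξ) * t) + ρ₂ := by
      funext z; rw [hu]
    rw [h]; continuity
  have hev : ∀ᶠ y in nhds x, Real.sinh (u y t) ≠ 0 :=
    ((Real.continuous_sinh.comp hucont).continuousAt).eventually_ne hs0
  -- the functions rewritten as explicit products
  have hφfx : (fun y => φ y t) = fun y =>
      ((A * (Real.sinh (u y t))⁻¹ : ℝ) : ℂ) * Complex.exp (Complex.I * ((ψ y t : ℝ) : ℂ)) := by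
    funext z; rw [hφ]; rw [hA]; norm_num
  have hφft : (fun τ => φ x τ) = fun τ =>
      ((A * (Real.sinh (u x τ))⁻¹ : ℝ) : ℂ) * Complex.exp (Complex.I * ((ψ x τ : ℝ) : ℂ)) := by
    funext z; rw [hφ]; rw [hA]; norm_num
  -- first derivative in x, as a function g
  set g : ℝ → ℂ := fun y =>
    ((A * (-(Real.cosh (u y t) * (2 * η)) / Real.sinh (u y t) ^ 2) : ℝ) : ℂ) *
        Complex.exp (Complex.I * ((ψ y t : ℝ) : ℂ)) +
      ((A * (Real.sinh (u y t))⁻¹ : ℝ) : ℂ) *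
        (Complex.exp (Complex.I * ((ψ y t : ℝ) : ℂ)) * (Complex.I * ((-(2 * ξ) : ℝ) : ℂ))) with hg
  have key : ∀ y : ℝ, Real.sinh (u y t) ≠ 0 → HasDerivAt (fun y => φ y t) (g y) y := by
    intro y hy
    rw [hφfx, hg]
    exact (((((Real.hasDerivAt_sinh (u y t)).comp y (hudx y)).inv (by exact hy)).const_mul A).ofReal_comp).mul
      ((((hψdx y).ofReal_comp).const_mul Complex.I).cexp)
  have hφx := key x hs0
  have hφt : HasDerivAt (fun τ => φ x τ)
      (((A * (-(Real.cosh (u x t) * (-(2 * η * (1 - 2 * ξ)))) / Real.sinh (u x t) ^ 2) : ℝ) : ℂ) *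
          Complex.exp (Complex.I * ((ψ x t : ℝ) : ℂ)) +
        ((A * (Real.sinh (u x t))⁻¹ : ℝ) : ℂ) *
          (Complex.exp (Complex.I * ((ψ x t : ℝ) : ℂ)) *
            (Complex.I * ((2 * (η ^ 2 - ξ ^ 2) + 2 * ξ : ℝ) : ℂ)))) t := by
    rw [hφft]
    exact (((((Real.hasDerivAt_sinh (u x t)).comp t hudt).inv hs0).const_mul A).ofReal_comp).mul
      (((hψdt.ofReal_comp).const_mul Complex.I).cexp)
  -- second derivative: deriv (deriv φ) = deriv g
  have hderiv_eq : deriv (fun y => φ y t) =ᶠ[nhds x] g := by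
    filter_upwards [hev] with y hy
    exact (key y hy).deriv
  have hdd : deriv (deriv (fun y => φ y t)) x = deriv g x := hderiv_eq.deriv_eq
  -- derivative of g at x
  have hs20 : Real.sinh (u x t) ^ 2 ≠ 0 := pow_ne_zero _ hs0
  have hG : HasDerivAt g
      ((((A * ((-(Real.sinh (u x t) * (2 * η) * (2 * η)) * Real.sinh (u x t) ^ 2 -
            -(Real.cosh (u x t) * (2 * η)) * ((2 : ℕ) * Real.sinh (u x t) ^ (2 - 1) * (Real.cosh (u x t) * (2 * η)))) /
          (Real.sinh (u x t) ^ 2) ^ 2) : ℝ) : ℂ) *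
          Complex.exp (Complex.I * ((ψ x t : ℝ) : ℂ)) +
        ((A * (-(Real.cosh (u x t) * (2 * η)) / Real.sinh (u x t) ^ 2) : ℝ) : ℂ) *
          (Complex.exp (Complex.I * ((ψ x t : ℝ) : ℂ)) * (Complex.I * ((-(2 * ξ) : ℝ) : ℂ)))) +
       (((A * (-(Real.cosh (u x t) * (2 * η)) / Real.sinh (u x t) ^ 2) : ℝ) : ℂ) *
          (Complex.exp (Complex.I * ((ψ x t : ℝ) : ℂ)) * (Complex.I * ((-(2 * ξ) : ℝ) : ℂ))) +
        ((A * (Real.sinh (u x t))⁻¹ : ℝ) : ℂ) *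
          (Complex.exp (Complex.I * ((ψ x t : ℝ) : ℂ)) * (Complex.I * ((-(2 * ξ) : ℝ) : ℂ)) *
            (Complex.I * ((-(2 * ξ) : ℝ) : ℂ))))) x := by
    have H := ((((((((Real.hasDerivAt_cosh (u x t)).comp x (hudx x)).mul_const (2 * η)).fun_neg).fun_div
        (((Real.hasDerivAt_sinh (u x t)).comp x (hudx x)).fun_pow 2) (by exact hs20)).const_mul A).ofReal_comp).fun_mul
        ((((hψdx x).ofReal_comp).const_mul Complex.I).cexp)).fun_add
      ((((((Real.hasDerivAt_sinh (u x t)).comp x (hudx x)).fun_inv (by exact hs0)).const_mul A).ofReal_comp).fun_mul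
        (((((hψdx x).ofReal_comp).const_mul Complex.I).cexp).mul_const (Complex.I * ((-(2 * ξ) : ℝ) : ℂ))))
    rw [hg]
    convert H using 1
    · rfl
    · rfl
    · rfl
  rw [hdd, hG.deriv, hφx.deriv, hφt.deriv, hφ x t, hn x t]
  have hcs : ((Real.cosh (u x t) : ℂ)) ^ 2 = ((Real.sinh (u x t) : ℂ)) ^ 2 + 1 := by
    exact_mod_cast Real.cosh_sq (u x t)
  have hsC : ((Real.sinh (u x t) : ℂ)) ≠ 0 := by exact_mod_cast hs0
  rw [hg]
  have hI : Complex.I ^ 2 = -1 := Complex.I_sq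
  have hsC' : Complex.sinh ((u x t : ℝ) : ℂ) ≠ 0 := by
    rw [← Complex.ofReal_sinh]; exact hsC
  have hcsC : Complex.cosh ((u x t : ℝ) : ℂ) ^ 2 = Complex.sinh ((u x t : ℝ) : ℂ) ^ 2 + 1 := by
    rw [← Complex.ofReal_sinh, ← Complex.ofReal_cosh]; exact hcs
  have hw : Complex.sinh ((u x t : ℝ) : ℂ) * (Complex.sinh ((u x t : ℝ) : ℂ))⁻¹ = 1 :=
    mul_inv_cancel₀ hsC'
  push_cast
  ring_nf
  set S : ℂ := Complex.sinh ((u x t : ℝ) : ℂ) with hS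
  set K : ℂ := ((η * Real.sqrt (-(ξ * 2)) * 2 : ℝ) : ℂ) * ((η : ℝ) : ℂ) ^ 2 *
    Complex.exp (Complex.I * ((ψ x t : ℝ) : ℂ)) with hK
  have hAe : ((A : ℝ) : ℂ) = ((η * Real.sqrt (-(ξ * 2)) * 2 : ℝ) : ℂ) := by
    rw [hA]; ring_nf
  linear_combination (2 * K * S⁻¹) * hI + (4 * K * S * (S⁻¹) ^ 4) * hcsC +
    (2 * K * S⁻¹ * (S ^ 2 * (S⁻¹) ^ 2 + S * S⁻¹ + 1) + 4 * K * (S⁻¹) ^ 3) * hw + (Complex.I ^ 2 * ((η:ℝ):ℂ) ^ 2 * S⁻¹ * Complex.exp (Complex.I * ((ψ x t : ℝ) : ℂ)) * 2 + ((η:ℝ):ℂ) ^ 2 * S * S⁻¹ ^ 4 * Complex.exp (Complex.I * ((ψ x t : ℝ) : ℂ)) * Complex.cosh ((u x t : ℝ) : ℂ) ^ 2 * 4 - ((η:ℝ):ℂ) ^ 2 * S ^ 3 * S⁻¹ ^ 4 * Complex.exp (Complex.I * ((ψ x t : ℝ) : ℂ)) * 2 - ((η:ℝ):ℂ) ^ 2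 * S⁻¹ ^ 3 * Complex.exp (Complex.I * ((ψ x t : ℝ) : ℂ)) * 4) * hAe
end

section
/- Let ξ < 0, η > 0, θ ∈ ℝ, ρ₂ ∈ ℝ, and define u(x,t) = 2η(x − (1 − 2ξ)t) + ρ₂, ψ(x,t) = 2(η² − ξ²)t − 2ξ(x − t) + θ, n(x,t) = 4η²·csch²(u(x,t)) and φ(x,t) = 2η·√(−2ξ)·csch(u(x,t))·e^{iψ(x,t)}. Then at every point (x,t) ∈ ℝ² with u(x,t) ≠ 0, ∂n/∂t(x,t) + ∂n/∂x(x,t) + ∂|φ|²/∂x(x,t) = 0. -/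
/-- The long-wave equation of the Yajima–Oikawa system,
`n_t + n_x + (|φ|²)_x = 0`, is satisfied by the one solitary wave solution
`n(x,t) = 4η² csch²(u(x,t))`, `φ(x,t) = 2η√(−2ξ) csch(u(x,t)) e^{iψ(x,t)}` with
`u(x,t) = 2η(x−(1−2ξ)t)+ρ₂` and `ψ(x,t) = 2(η²−ξ²)t−2ξ(x−t)+θ`, for `ξ < 0`, `η > 0`,
at every point where `u(x,t) ≠ 0`. -/
theorem stmt_3 (ξ η θ ρ₂ : ℝ) (hξ : ξ < 0) (hη : 0 < η)
    (u ψ : ℝ → ℝ → ℝ) (n : ℝ → ℝ → ℝ) (φ : ℝ → ℝ → ℂ)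
    (hu : ∀ x t, u x t = 2 * η * (x - (1 - 2 * ξ) * t) + ρ₂)
    (hψ : ∀ x t, ψ x t = 2 * (η ^ 2 - ξ ^ 2) * t - 2 * ξ * (x - t) + θ)
    (hn : ∀ x t, n x t = 4 * η ^ 2 * (1 / Real.sinh (u x t)) ^ 2)
    (hφ : ∀ x t, φ x t =
      ((2 * η * Real.sqrt (-2 * ξ) * (1 / Real.sinh (u x t)) : ℝ) : ℂ) *
        Complex.exp (Complex.I * ((ψ x t : ℝ) : ℂ)))
    (x t : ℝ) (hu0 : u x t ≠ 0) :
    deriv (fun τ => n x τ) t + deriv (fun y => n y t) x +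
      deriv (fun y => ‖φ y t‖ ^ 2) x = 0 := by
  have hs : Real.sinh (u x t) ≠ 0 := by
    simp [Real.sinh_eq_zero, hu0]
  set s := Real.sinh (u x t) with hsdef
  set c := Real.cosh (u x t) with hcdef
  -- derivative of csch² at u x t
  have hC : HasDerivAt (fun v => ((Real.sinh v)⁻¹) ^ 2)
      (2 * (s⁻¹) ^ 1 * (-c / s ^ 2)) (u x t) := by
    exact ((Real.hasDerivAt_sinh (u x t)).inv hs).pow 2
  -- derivative of u in t
  have hUt : HasDerivAt (fun τ : ℝ => u x τ) (2 * η * (-(1 - 2 * ξ))) t := by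
    have : (fun τ : ℝ => u x τ) = fun τ => 2 * η * (x - (1 - 2 * ξ) * τ) + ρ₂ :=
      funext fun τ => hu x τ
    rw [this]
    exact ((((hasDerivAt_id t).const_mul (1 - 2 * ξ)).const_sub x).const_mul
      (2 * η)).add_const ρ₂ |>.congr_deriv (by ring)
  -- derivative of u in x
  have hUx : HasDerivAt (fun y : ℝ => u y t) (2 * η) x := by
    have : (fun y : ℝ => u y t) = fun y => 2 * η * (y - (1 - 2 * ξ) * t) + ρ₂ :=
      funext fun y => hu y t
    rw [this]
    exact (((hasDerivAt_id x).sub_const ((1 - 2 * ξ) * t)).const_mul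
      (2 * η)).add_const ρ₂ |>.congr_deriv (by ring)
  have hUx' : HasDerivAt (fun y : ℝ => u y t) (2 * η) x := hUx
  -- n as function of t
  have hnt : HasDerivAt (fun τ => n x τ)
      (4 * η ^ 2 * (2 * (s⁻¹) ^ 1 * (-c / s ^ 2) * (2 * η * (-(1 - 2 * ξ))))) t := by
    have heq : (fun τ => n x τ)
        = fun τ => 4 * η ^ 2 * ((Real.sinh (u x τ))⁻¹) ^ 2 := by
      funext τ; rw [hn]; rw [one_div]
    rw [heq]
    exact (hC.comp t hUt).const_mul _
  have hnx : HasDerivAt (fun y => n y t)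
      (4 * η ^ 2 * (2 * (s⁻¹) ^ 1 * (-c / s ^ 2) * (2 * η))) x := by
    have heq : (fun y => n y t)
        = fun y => 4 * η ^ 2 * ((Real.sinh (u y t))⁻¹) ^ 2 := by
      funext y; rw [hn]; rw [one_div]
    rw [heq]
    exact (hC.comp x hUx).const_mul _
  -- |φ|² as function of x
  have habs : (fun y => ‖φ y t‖ ^ 2)
      = fun y => 4 * η ^ 2 * (-2 * ξ) * ((Real.sinh (u y t))⁻¹) ^ 2 := by
    funext y
    rw [hφ]
    rw [norm_mul, Complex.norm_real, Real.norm_eq_abs, Complex.norm_exp]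
    have : (Complex.I * ((ψ y t : ℝ) : ℂ)).re = 0 := by simp
    rw [this, Real.exp_zero, mul_one, sq_abs]
    have hsq : Real.sqrt (-2 * ξ) ^ 2 = -2 * ξ :=
      Real.sq_sqrt (by nlinarith)
    rw [one_div, mul_pow, mul_pow, hsq]
    ring
  have hφx : HasDerivAt (fun y => ‖φ y t‖ ^ 2)
      (4 * η ^ 2 * (-2 * ξ) * (2 * (s⁻¹) ^ 1 * (-c / s ^ 2) * (2 * η))) x := by
    rw [habs]
    exact (hC.comp x hUx).const_mul _
  rw [hnt.deriv, hnx.deriv, hφx.deriv]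
  field_simp
  ring
end

section
/- Let ξ > 0, η > 0, γ ∈ ℂ with γ ≠ 0, k₀ = ξ + iη, and ρ₁ = log(√(2ξ)·η / (2|γk₀|)). Then for every (x,t) ∈ ℝ², 8i·k̄₀·γ̄·e^{−2ik̄₀((k̄₀ − 1)t + x)} / (1 − 16|γk₀|²·e^{2i(k₀ − k̄₀)((k₀ + k̄₀ − 1)t + x)} / ((k̄₀ − k₀)²(k̄₀ + k₀))) = 2η·√(2ξ)·sech(2η(x − (1 − 2ξ)t) + ρ₁)·e^{i(2(η² − ξ²)t − 2ξ(x − t))}·(i·γ̄·k̄₀/|γk₀|). -/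
open ComplexConjugate

theorem real_key (ξ η A : ℝ) (hξ : 0 < ξ) (hη : 0 < η) (hA : 0 < A) (u ρ₁ : ℝ)
    (hρ₁ : ρ₁ = Real.log (Real.sqrt (2 * ξ) * η / (2 * A))) :
    8 * Real.exp (-u) / (1 + 2 * A ^ 2 * Real.exp (-2*u) / (η ^ 2 * ξ)) =
      2 * η * Real.sqrt (2 * ξ) * (1 / Real.cosh (u + ρ₁)) / A := by
  have hs : 0 < Real.sqrt (2 * ξ) := Real.sqrt_pos.2 (by linarith)
  have hs2 : Real.sqrt (2 * ξ) ^ 2 = 2 * ξ := Real.sq_sqrt (by linarith)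
  have hB : 0 < Real.sqrt (2 * ξ) * η / (2 * A) := by positivity
  have heρ : Real.exp ρ₁ = Real.sqrt (2 * ξ) * η / (2 * A) := by rw [hρ₁, Real.exp_log hB]
  have hcosh : Real.cosh (u + ρ₁) =
      (Real.exp u * (Real.sqrt (2 * ξ) * η / (2 * A)) +
        Real.exp (-u) / (Real.sqrt (2 * ξ) * η / (2 * A))) / 2 := by
    rw [Real.cosh_eq, Real.exp_add, Real.exp_neg, Real.exp_add, Real.exp_neg, heρ]
    ring
  have hE : Real.exp u * Real.exp (-u) = 1 := by rw [← Real.exp_add]; simp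
  have hE2 : Real.exp (-2*u) = Real.exp (-u) ^ 2 := by rw [← Real.exp_nat_mul]; ring_nf
  have hcp : 0 < Real.cosh (u + ρ₁) := Real.cosh_pos _
  have hEp : 0 < Real.exp (-u) := Real.exp_pos _
  have hup : 0 < Real.exp u := Real.exp_pos _
  rw [hE2, hcosh]
  generalize hgs : Real.sqrt (2 * ξ) = s at *
  field_simp
  linear_combination (8*ξ*η^2*s^2)*hE - (16*A^2*Real.exp (-u)^2)*hs2

/-- Simplification of the rational-exponential form of the short-wave potential `φ(x,t)`
of the one-soliton solution (`ξ > 0`) of the Yajima–Oikawa equation: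
with `k₀ = ξ + iη` and `ρ₁ = log(√(2ξ)η/(2|γk₀|))`,
`8i k̄₀ γ̄ e^{−2ik̄₀((k̄₀−1)t+x)} / (1 − 16|γk₀|² e^{2i(k₀−k̄₀)((k₀+k̄₀−1)t+x)}/((k̄₀−k₀)²(k̄₀+k₀)))
 = 2η√(2ξ) sech(2η(x−(1−2ξ)t)+ρ₁) e^{i(2(η²−ξ²)t−2ξ(x−t))} · (i γ̄ k̄₀/|γk₀|)`. -/
theorem stmt_5 (ξ η : ℝ) (hξ : 0 < ξ) (hη : 0 < η) (γ : ℂ) (hγ : γ ≠ 0)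
    (k₀ : ℂ) (hk₀ : k₀ = (ξ : ℂ) + (η : ℂ) * Complex.I)
    (ρ₁ : ℝ) (hρ₁ : ρ₁ = Real.log (Real.sqrt (2 * ξ) * η / (2 * ‖γ * k₀‖)))
    (x t : ℝ) :
    8 * Complex.I * conj k₀ * conj γ *
        Complex.exp (-2 * Complex.I * conj k₀ * ((conj k₀ - 1) * (t : ℂ) + (x : ℂ))) /
      (1 - 16 * ((‖γ * k₀‖ : ℝ) : ℂ) ^ 2 *
          Complex.exp (2 * Complex.I * (k₀ - conj k₀) *
            ((k₀ + conj k₀ - 1) * (t : ℂ) + (x : ℂ))) /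
        ((conj k₀ - k₀) ^ 2 * (conj k₀ + k₀))) =
      ((2 * η * Real.sqrt (2 * ξ) * (1 / Real.cosh (2 * η * (x - (1 - 2 * ξ) * t) + ρ₁)) : ℝ) : ℂ) *
        Complex.exp (Complex.I * ((2 * (η ^ 2 - ξ ^ 2) * t - 2 * ξ * (x - t) : ℝ) : ℂ)) *
        (Complex.I * conj γ * conj k₀ / ((‖γ * k₀‖ : ℝ) : ℂ)) := by
  have hkc : conj k₀ = (ξ : ℂ) - (η : ℂ) * Complex.I := by
    rw [hk₀]; simp [map_add, map_mul, Complex.conj_ofReal, Complex.conj_I]; ring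
  have hk₀ne : k₀ ≠ 0 := by
    rw [hk₀]; intro h
    have := congrArg Complex.im h
    simp at this
    exact absurd this (ne_of_gt hη)
  set A : ℝ := ‖γ * k₀‖ with hA
  have hApos : 0 < A := norm_pos_iff.mpr (mul_ne_zero hγ hk₀ne)
  set u : ℝ := 2 * η * (x - (1 - 2 * ξ) * t) with hu
  set θ : ℝ := 2 * (η ^ 2 - ξ ^ 2) * t - 2 * ξ * (x - t) with hθ
  have hden : (conj k₀ - k₀) ^ 2 * (conj k₀ + k₀) = ((-8 * η^2 * ξ : ℝ) : ℂ) := by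
    rw [hkc, hk₀]; push_cast
    linear_combination (8*(η:ℂ)^2*(ξ:ℂ)) * Complex.I_sq
  have hexp1 : 2 * Complex.I * (k₀ - conj k₀) * ((k₀ + conj k₀ - 1) * (t : ℂ) + (x : ℂ))
      = ((-2*u : ℝ) : ℂ) := by
    rw [hkc, hk₀, hu]; push_cast
    linear_combination ((4*(η:ℂ)*((2*ξ-1)*t+x))) * Complex.I_sq
  have hexp2 : -2 * Complex.I * conj k₀ * ((conj k₀ - 1) * (t : ℂ) + (x : ℂ))
      = ((-u : ℝ) : ℂ) + Complex.I * ((θ : ℝ) : ℂ) := by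
    rw [hkc, hu, hθ]; push_cast
    linear_combination ((-2*(η:ℂ)^2*(t:ℂ))*Complex.I + 2*(η:ℂ)*((2*ξ-1)*t+x)) * Complex.I_sq
  rw [hden, hexp1, hexp2, Complex.exp_add, ← Complex.ofReal_exp, ← Complex.ofReal_exp]
  set E : ℝ := Real.exp (-u) with hE
  set E2 : ℝ := Real.exp (-2*u) with hE2v
  set P : ℂ := Complex.exp (Complex.I * (θ : ℂ)) with hP
  have hPne : P ≠ 0 := Complex.exp_ne_zero _
  set R : ℝ := 2 * η * Real.sqrt (2 * ξ) * (1 / Real.cosh (u + ρ₁)) with hR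
  set D : ℝ := 1 + 2 * A ^ 2 * E2 / (η ^ 2 * ξ) with hD
  have hDpos : 0 < D := by
    have hE2p : 0 < E2 := Real.exp_pos _
    have h1 : 0 < 2 * A ^ 2 * E2 / (η ^ 2 * ξ) := by positivity
    rw [hD]; linarith
  have hdeq : (1 : ℂ) - 16 * ((A:ℝ):ℂ) ^ 2 * ((E2:ℝ):ℂ) / ((-8 * η^2 * ξ : ℝ) : ℂ) = ((D:ℝ):ℂ) := by
    rw [hD]; push_cast
    have hηne : (η:ℂ) ≠ 0 := by exact_mod_cast ne_of_gt hη
    have hξne : (ξ:ℂ) ≠ 0 := by exact_mod_cast ne_of_gt hξ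
    field_simp
    ring
  rw [hdeq]
  have key : 8 * E / D = R / A := by
    rw [hR, hD, hE, hE2v]
    exact real_key ξ η A hξ hη hApos u ρ₁ hρ₁
  have hDne : D ≠ 0 := ne_of_gt hDpos
  have hAne : A ≠ 0 := ne_of_gt hApos
  rw [div_eq_div_iff hDne hAne] at key
  have keyC : ((8 * E * A : ℝ) : ℂ) = ((R * D : ℝ) : ℂ) := by exact_mod_cast key
  push_cast at keyC
  have hDneC : ((D:ℝ):ℂ) ≠ 0 := by exact_mod_cast hDne
  have hAneC : ((A:ℝ):ℂ) ≠ 0 := by exact_mod_cast hAne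
  rw [div_eq_iff hDneC]
  field_simp
  linear_combination (conj γ * conj k₀) * keyC
end

section
/- Let ξ < 0, η > 0, γ ∈ ℂ with γ ≠ 0, k₀ = ξ + iη, and ρ₂ = log(√(−2ξ)·η / (2|γk₀|)). Then at every (x,t) ∈ ℝ² with 2η(x − (1 − 2ξ)t) + ρ₂ ≠ 0, 8i·k̄₀·γ̄·e^{−2ik̄₀((k̄₀ − 1)t + x)} / (1 − 16|γk₀|²·e^{2i(k₀ − k̄₀)((k₀ + k̄₀ − 1)t + x)} / ((k̄₀ − k₀)²(k̄₀ + k₀))) = 2η·√(−2ξ)·csch(2η(x − (1 − 2ξ)t) + ρ₂)·e^{i(2(η² − ξ²)t − 2ξ(x − t))}·(i·γ̄·k̄₀/|γk₀|). -/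
open ComplexConjugate

lemma core_real (η s A u ρ₂ : ℝ) (hη : 0 < η) (hs : 0 < s) (hA : 0 < A)
    (hP : 2 * A * Real.exp ρ₂ = Real.sqrt s * η) (hne : u + ρ₂ ≠ 0) :
    8 * Real.exp (-u) / (1 - 4 * A ^ 2 * Real.exp (-u) ^ 2 / (η ^ 2 * s)) =
      2 * η * Real.sqrt s * (1 / Real.sinh (u + ρ₂)) / A := by
  have hsq : Real.sqrt s ^ 2 = s := Real.sq_sqrt hs.le
  set P := Real.exp ρ₂ with hPdef
  set E := Real.exp (-u) with hEdef
  have hP0 : (0:ℝ) < P := Real.exp_pos _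
  have hE0 : (0:ℝ) < E := Real.exp_pos _
  have hsinh : Real.sinh (u + ρ₂) ≠ 0 := by
    simp only [ne_eq, Real.sinh_eq_zero]; exact hne
  have hPE : P ^ 2 - E ^ 2 ≠ 0 := by
    intro h
    have h2 : P = E := by nlinarith
    have : ρ₂ = -u := Real.exp_injective (by rw [← hPdef, ← hEdef, h2])
    exact hne (by linarith)
  have h2 : Real.sinh (u + ρ₂) = (P ^ 2 - E ^ 2) / (2 * E * P) := by
    rw [Real.sinh_eq, Real.exp_add, Real.exp_neg (u + ρ₂), Real.exp_add]
    rw [show Real.exp u = E⁻¹ by rw [hEdef, Real.exp_neg, inv_inv]]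
    field_simp
    ring
  have h1 : 1 - 4 * A ^ 2 * E ^ 2 / (η ^ 2 * s) = (P ^ 2 - E ^ 2) / P ^ 2 := by
    have h4 : 4 * A ^ 2 * P ^ 2 = s * η ^ 2 := by
      linear_combination (2 * A * P + Real.sqrt s * η) * hP + η ^ 2 * hsq
    field_simp
    linear_combination (-(E^2)) * h4
  rw [h1, h2]
  have hss : Real.sqrt s * η = 2 * A * P := hP.symm
  field_simp
  linear_combination (-4) * hss

lemma core_ne (η s A u ρ₂ : ℝ) (hη : 0 < η) (hs : 0 < s) (hA : 0 < A)
    (hP : 2 * A * Real.exp ρ₂ = Real.sqrt s * η) (hne : u + ρ₂ ≠ 0) :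
    1 - 4 * A ^ 2 * Real.exp (-u) ^ 2 / (η ^ 2 * s) ≠ 0 := by
  have hsq : Real.sqrt s ^ 2 = s := Real.sq_sqrt hs.le
  set P := Real.exp ρ₂ with hPdef
  set E := Real.exp (-u) with hEdef
  have hP0 : (0:ℝ) < P := Real.exp_pos _
  have hE0 : (0:ℝ) < E := Real.exp_pos _
  have hPE : P ^ 2 - E ^ 2 ≠ 0 := by
    intro h
    have h2 : P = E := by nlinarith
    have : ρ₂ = -u := Real.exp_injective (by rw [← hPdef, ← hEdef, h2])
    exact hne (by linarith)
  have h1 : 1 - 4 * A ^ 2 * E ^ 2 / (η ^ 2 * s) = (P ^ 2 - E ^ 2) / P ^ 2 := by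
    have h4 : 4 * A ^ 2 * P ^ 2 = s * η ^ 2 := by
      linear_combination (2 * A * P + Real.sqrt s * η) * hP + η ^ 2 * hsq
    field_simp
    linear_combination (-(E^2)) * h4
  rw [h1]
  exact div_ne_zero hPE (by positivity)

/-- Simplification of the rational-exponential form of the short-wave potential `φ(x,t)`
of the one solitary wave solution (`ξ < 0`) of the Yajima–Oikawa equation:
with `k₀ = ξ + iη` and `ρ₂ = log(√(−2ξ)η/(2|γk₀|))`, at points where
`2η(x−(1−2ξ)t)+ρ₂ ≠ 0`,
`8i k̄₀ γ̄ e^{−2ik̄₀((k̄₀−1)t+x)} / (1 − 16|γk₀|² e^{2i(k₀−k̄₀)((k₀+k̄₀−1)t+x)}/((k̄₀−k₀)²(k̄₀+k₀)))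
 = 2η√(−2ξ) csch(2η(x−(1−2ξ)t)+ρ₂) e^{i(2(η²−ξ²)t−2ξ(x−t))} · (i γ̄ k̄₀/|γk₀|)`. -/
theorem stmt_7 (ξ η : ℝ) (hξ : ξ < 0) (hη : 0 < η) (γ : ℂ) (hγ : γ ≠ 0)
    (k₀ : ℂ) (hk₀ : k₀ = (ξ : ℂ) + (η : ℂ) * Complex.I)
    (ρ₂ : ℝ) (hρ₂ : ρ₂ = Real.log (Real.sqrt (-2 * ξ) * η / (2 * ‖γ * k₀‖)))
    (x t : ℝ) (hu0 : 2 * η * (x - (1 - 2 * ξ) * t) + ρ₂ ≠ 0) :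
    8 * Complex.I * conj k₀ * conj γ *
        Complex.exp (-2 * Complex.I * conj k₀ * ((conj k₀ - 1) * (t : ℂ) + (x : ℂ))) /
      (1 - 16 * ((‖γ * k₀‖ : ℝ) : ℂ) ^ 2 *
          Complex.exp (2 * Complex.I * (k₀ - conj k₀) *
            ((k₀ + conj k₀ - 1) * (t : ℂ) + (x : ℂ))) /
        ((conj k₀ - k₀) ^ 2 * (conj k₀ + k₀))) =
      ((2 * η * Real.sqrt (-2 * ξ) *
          (1 / Real.sinh (2 * η * (x - (1 - 2 * ξ) * t) + ρ₂)) : ℝ) : ℂ) *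
        Complex.exp (Complex.I * ((2 * (η ^ 2 - ξ ^ 2) * t - 2 * ξ * (x - t) : ℝ) : ℂ)) *
        (Complex.I * conj γ * conj k₀ / ((‖γ * k₀‖ : ℝ) : ℂ)) := by
  set A : ℝ := ‖γ * k₀‖ with hAdef
  set u : ℝ := 2 * η * (x - (1 - 2 * ξ) * t) with hudef
  set θ : ℝ := 2 * (η ^ 2 - ξ ^ 2) * t - 2 * ξ * (x - t) with hθdef
  set s : ℝ := -2 * ξ with hsdef
  have hs : 0 < s := by simp [hsdef]; linarith
  have hk₀ne : k₀ ≠ 0 := by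
    rw [hk₀]; intro h
    have := congrArg Complex.im h
    simp at this; linarith
  have hA : 0 < A := by
    rw [hAdef]
    exact (norm_pos_iff.mpr (mul_ne_zero hγ hk₀ne))
  have hP : 2 * A * Real.exp ρ₂ = Real.sqrt s * η := by
    have hpos : 0 < Real.sqrt s * η / (2 * A) := by positivity
    rw [hρ₂, Real.exp_log hpos]
    field_simp
  have hcon : conj k₀ = (ξ : ℂ) - (η : ℂ) * Complex.I := by
    rw [hk₀]; simp [map_add, map_mul, Complex.conj_ofReal, Complex.conj_I]; ring
  -- exponent identities
  have harg1 : -2 * Complex.I * conj k₀ * ((conj k₀ - 1) * (t : ℂ) + (x : ℂ))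
      = ((-u : ℝ) : ℂ) + Complex.I * ((θ : ℝ) : ℂ) := by
    rw [hcon, hudef, hθdef]
    push_cast
    linear_combination (4*(ξ:ℂ)*η*t - 2*(η:ℂ)*t + 2*(η:ℂ)*x - 2*(η:ℂ)^2*t*Complex.I) * Complex.I_sq
  have harg2 : 2 * Complex.I * (k₀ - conj k₀) * ((k₀ + conj k₀ - 1) * (t : ℂ) + (x : ℂ))
      = ((-(2*u) : ℝ) : ℂ) := by
    rw [hcon, hk₀, hudef]
    push_cast
    linear_combination (4*(η:ℂ)*((2*ξ-1)*t + x)) * Complex.I_sq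
  have hden : (conj k₀ - k₀) ^ 2 * (conj k₀ + k₀) = ((4 * η ^ 2 * s : ℝ) : ℂ) := by
    rw [hcon, hk₀, hsdef]
    push_cast
    linear_combination (8*(η:ℂ)^2*ξ) * Complex.I_sq
  rw [harg1, harg2, hden, Complex.exp_add, ← Complex.ofReal_exp, ← Complex.ofReal_exp]
  -- rewrite exp(-(2u)) = exp(-u)^2
  have hE2 : Real.exp (-(2*u)) = Real.exp (-u) ^ 2 := by
    rw [sq, ← Real.exp_add]; ring_nf
  rw [hE2]
  set E : ℝ := Real.exp (-u) with hEdef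
  set Dr : ℝ := 1 - 4 * A ^ 2 * E ^ 2 / (η ^ 2 * s) with hDrdef
  have hDr : Dr ≠ 0 := core_ne η s A u ρ₂ hη hs hA hP hu0
  have key : 8 * E / Dr = 2 * η * Real.sqrt s * (1 / Real.sinh (u + ρ₂)) / A :=
    core_real η s A u ρ₂ hη hs hA hP hu0
  have keyc : (8 * (E:ℂ) / (Dr:ℂ)) = ((2 * η * Real.sqrt s * (1 / Real.sinh (u + ρ₂)) : ℝ) : ℂ) / (A:ℂ) := by
    rw [show (8 * (E:ℂ) / (Dr:ℂ)) = ((8 * E / Dr : ℝ) : ℂ) by push_cast; ring, key]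
    push_cast; ring
  have hDc : 1 - 16 * ((A:ℝ):ℂ) ^ 2 * (((E^2 : ℝ)):ℂ) / ((4 * η ^ 2 * s : ℝ) : ℂ) = ((Dr : ℝ) : ℂ) := by
    rw [hDrdef]
    have hη' : ((η:ℝ):ℂ) ≠ 0 := Complex.ofReal_ne_zero.mpr (ne_of_gt hη)
    have hs' : ((s:ℝ):ℂ) ≠ 0 := Complex.ofReal_ne_zero.mpr (ne_of_gt hs)
    push_cast
    field_simp
    ring
  rw [hDc]
  have hDr' : ((Dr:ℝ):ℂ) ≠ 0 := Complex.ofReal_ne_zero.mpr hDr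
  calc 8 * Complex.I * conj k₀ * conj γ * ((E:ℂ) * Complex.exp (Complex.I * ((θ:ℝ):ℂ))) / ((Dr:ℝ):ℂ)
      = (8 * (E:ℂ) / (Dr:ℂ)) * (Complex.I * conj k₀ * conj γ * Complex.exp (Complex.I * ((θ:ℝ):ℂ))) := by
        ring
    _ = (((2 * η * Real.sqrt s * (1 / Real.sinh (u + ρ₂)) : ℝ) : ℂ) / (A:ℂ)) * (Complex.I * conj k₀ * conj γ * Complex.exp (Complex.I * ((θ:ℝ):ℂ))) := by
        rw [keyc]
    _ = ((2 * η * Real.sqrt s * (1 / Real.sinh (u + ρ₂)) : ℝ) : ℂ) * Complex.exp (Complex.I * ((θ:ℝ):ℂ)) * (Complex.I * conj γ * conj k₀ / ((A:ℝ):ℂ)) := by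
        ring
end

section
/- Let k₁ > 0, t > 0, q ∈ ℂ with q ≠ 0 and 8k₁|q|² < 1, set ν = −(1/(2π))·log(1 − 8k₁|q|²), and let s ∈ ℂ be purely imaginary (Re s = 0). Then the modulus of √(2π)·(2√t)^{−2iν}·exp(iν·log(2k₁) − 3πi/4 + 2itk₁² − πν/2 + s) / (2√t·q·Γ(−iν)) equals √(2k₁ν)/√t. -/
/-- `|Γ(-iν)|² = π/(ν sinh(πν))` for `ν > 0`. -/
lemma gamma_normSq_aux (ν : ℝ) (hν : 0 < ν) :
    Complex.normSq (Complex.Gamma (-(Complex.I * (ν : ℂ)))) =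
      Real.pi / (ν * Real.sinh (Real.pi * ν)) := by
  have hν' : (Complex.I * (ν : ℂ)) ≠ 0 := by
    simp [Complex.I_ne_zero, Complex.ofReal_ne_zero, hν.ne']
  have hconj : (starRingEnd ℂ) (-(Complex.I * (ν : ℂ))) = Complex.I * (ν : ℂ) := by
    simp [Complex.conj_I]
  have h1 := Complex.Gamma_mul_Gamma_one_sub (-(Complex.I * (ν : ℂ)))
  have h2 : Complex.Gamma (1 - -(Complex.I * (ν : ℂ))) =
      (Complex.I * (ν : ℂ)) * Complex.Gamma (Complex.I * (ν : ℂ)) := by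
    rw [show (1 - -(Complex.I * (ν : ℂ))) = Complex.I * (ν : ℂ) + 1 by ring]
    exact Complex.Gamma_add_one _ hν'
  have h3 : Complex.sin ((Real.pi : ℂ) * -(Complex.I * (ν : ℂ))) =
      -((Real.sinh (Real.pi * ν) : ℝ) : ℂ) * Complex.I := by
    rw [show (Real.pi : ℂ) * -(Complex.I * (ν : ℂ)) = -(((Real.pi * ν : ℝ) : ℂ) * Complex.I) by
      push_cast; ring, Complex.sin_neg, Complex.sin_mul_I]
    push_cast [Complex.ofReal_sinh]
    ring
  rw [h2, h3] at h1
  have hsinh : Real.sinh (Real.pi * ν) ≠ 0 :=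
    (Real.sinh_pos_iff.2 (by positivity)).ne'
  have key : Complex.Gamma (-(Complex.I * (ν : ℂ))) * Complex.Gamma (Complex.I * (ν : ℂ)) =
      (((Real.pi / (ν * Real.sinh (Real.pi * ν))) : ℝ) : ℂ) := by
    have hI : Complex.I * Complex.I = -1 := Complex.I_mul_I
    have hcs : Complex.sinh ((Real.pi : ℂ) * (ν : ℂ)) ≠ 0 := by
      rw [← Complex.ofReal_mul, ← Complex.ofReal_sinh]
      exact_mod_cast hsinh
    have hden : (-((Real.sinh (Real.pi * ν) : ℝ) : ℂ) * Complex.I) ≠ 0 := by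
      simp [Complex.I_ne_zero, Complex.ofReal_eq_zero, hcs]
    rw [eq_div_iff hden] at h1
    have hden2 : ((ν : ℂ) * ((Real.sinh (Real.pi * ν) : ℝ) : ℂ)) ≠ 0 := by
      simp [hν.ne', Complex.ofReal_eq_zero, hcs]
    rw [show (((Real.pi / (ν * Real.sinh (Real.pi * ν))) : ℝ) : ℂ) =
        (Real.pi : ℂ) / ((ν : ℂ) * ((Real.sinh (Real.pi * ν) : ℝ) : ℂ)) by push_cast; ring,
      eq_div_iff hden2]
    linear_combination h1 + (Complex.Gamma (-(Complex.I * (ν : ℂ))) *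
      Complex.Gamma (Complex.I * (ν : ℂ)) * (ν : ℂ) *
      ((Real.sinh (Real.pi * ν) : ℝ) : ℂ)) * hI
  have := Complex.mul_conj (Complex.Gamma (-(Complex.I * (ν : ℂ))))
  rw [← Complex.Gamma_conj, hconj, key] at this
  exact_mod_cast this.symm

/-- Modulus of the leading term of the long-time asymptotics of `φ(x,t)` for the
Yajima–Oikawa equation in the region `ζ = x/t > 1`: with `k₁ > 0`, `t > 0`, `q ≠ 0`,
`8k₁|q|² < 1`, `ν = −(1/2π) log(1 − 8k₁|q|²)` and `s` purely imaginary,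
`|√(2π)(2√t)^{−2iν} exp(iν log(2k₁) − 3πi/4 + 2itk₁² − πν/2 + s)/(2√t q Γ(−iν))|
 = √(2k₁ν)/√t`. -/
theorem stmt_9 (k₁ t : ℝ) (hk₁ : 0 < k₁) (ht : 0 < t) (q : ℂ) (hq : q ≠ 0)
    (hsmall : 8 * k₁ * ‖q‖ ^ 2 < 1)
    (ν : ℝ) (hν : ν = -(1 / (2 * Real.pi)) * Real.log (1 - 8 * k₁ * ‖q‖ ^ 2))
    (s : ℂ) (hs : s.re = 0) :
    ‖(((Real.sqrt (2 * Real.pi) : ℝ) : ℂ) *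
        ((2 * Real.sqrt t : ℝ) : ℂ) ^ (-2 * Complex.I * (ν : ℂ)) *
        Complex.exp (Complex.I * (ν : ℂ) * ((Real.log (2 * k₁) : ℝ) : ℂ) -
          3 * (Real.pi : ℂ) * Complex.I / 4 + 2 * Complex.I * (t : ℂ) * (k₁ : ℂ) ^ 2 -
          (Real.pi : ℂ) * (ν : ℂ) / 2 + s) /
        (((2 * Real.sqrt t : ℝ) : ℂ) * q * Complex.Gamma (-(Complex.I * (ν : ℂ)))))‖ =
      Real.sqrt (2 * k₁ * ν) / Real.sqrt t := by
  set a : ℝ := ‖q‖ with ha_def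
  have ha : 0 < a := norm_pos_iff.mpr hq
  have hπ : 0 < Real.pi := Real.pi_pos
  have hp : 0 < 8 * k₁ * a ^ 2 := by positivity
  have hlog : Real.log (1 - 8 * k₁ * a ^ 2) < 0 :=
    Real.log_neg (by linarith) (by linarith)
  have hν0 : 0 < ν := by
    rw [hν]
    have h2π : 0 < 1 / (2 * Real.pi) := by positivity
    nlinarith
  have hexp : Real.exp (-(2 * Real.pi * ν)) = 1 - 8 * k₁ * a ^ 2 := by
    rw [hν, show -(2 * Real.pi * (-(1 / (2 * Real.pi)) *
        Real.log (1 - 8 * k₁ * a ^ 2))) = Real.log (1 - 8 * k₁ * a ^ 2) by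
      field_simp]
    exact Real.exp_log (by linarith)
  have hsinh0 : 0 < Real.sinh (Real.pi * ν) := Real.sinh_pos_iff.2 (by positivity)
  have hsinh : Real.exp (-(Real.pi * ν)) * Real.sinh (Real.pi * ν) = 4 * k₁ * a ^ 2 := by
    rw [Real.sinh_eq]
    have e1 : Real.exp (-(Real.pi * ν)) * Real.exp (Real.pi * ν) = 1 := by
      rw [← Real.exp_add]; simp
    have e2 : Real.exp (-(Real.pi * ν)) * Real.exp (-(Real.pi * ν)) =
        Real.exp (-(2 * Real.pi * ν)) := by
      rw [← Real.exp_add]; ring_nf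
    nlinarith [hexp]
  have hst : 0 < Real.sqrt t := Real.sqrt_pos.2 ht
  -- compute the moduli of the factors
  have hA : ‖((Real.sqrt (2 * Real.pi) : ℝ) : ℂ)‖ = Real.sqrt (2 * Real.pi) := by
    rw [Complex.norm_real, Real.norm_eq_abs, abs_of_nonneg (Real.sqrt_nonneg _)]
  have hB : ‖((2 * Real.sqrt t : ℝ) : ℂ) ^ (-2 * Complex.I * (ν : ℂ))‖ = 1 := by
    rw [Complex.norm_cpow_eq_rpow_re_of_pos (by positivity)]
    simp
  have hC : ‖(Complex.exp (Complex.I * (ν : ℂ) * ((Real.log (2 * k₁) : ℝ) : ℂ) -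
      3 * (Real.pi : ℂ) * Complex.I / 4 + 2 * Complex.I * (t : ℂ) * (k₁ : ℂ) ^ 2 -
      (Real.pi : ℂ) * (ν : ℂ) / 2 + s))‖ = Real.exp (-(Real.pi * ν / 2)) := by
    rw [Complex.norm_exp]
    congr 1
    simp [Complex.add_re, Complex.sub_re, Complex.mul_re, Complex.mul_im, Complex.div_re,
      Complex.I_re, Complex.I_im, Complex.ofReal_re, Complex.ofReal_im, hs, Complex.normSq, ← Complex.ofReal_pow]
  have hD : ‖(((2 * Real.sqrt t : ℝ) : ℂ))‖ = 2 * Real.sqrt t := by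
    rw [Complex.norm_real, Real.norm_eq_abs, abs_of_nonneg (by positivity)]
  have hG : ‖Complex.Gamma (-(Complex.I * (ν : ℂ)))‖ =
      Real.sqrt (Real.pi / (ν * Real.sinh (Real.pi * ν))) := by
    rw [Complex.norm_def, gamma_normSq_aux ν hν0]
  rw [norm_div, norm_mul, norm_mul, norm_mul, norm_mul, hA, hB, hC, hD, hG]
  -- now a purely real computation
  set L : ℝ := Real.sqrt (2 * Real.pi) * 1 * Real.exp (-(Real.pi * ν / 2)) /
      (2 * Real.sqrt t * a * Real.sqrt (Real.pi / (ν * Real.sinh (Real.pi * ν)))) with hL_def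
  have hGpos : 0 < Real.pi / (ν * Real.sinh (Real.pi * ν)) := by positivity
  have hLnonneg : 0 ≤ L := by
    rw [hL_def]; positivity
  have hLsq : L ^ 2 = 2 * k₁ * ν / t := by
    rw [hL_def]
    have s1 : Real.sqrt (2 * Real.pi) ^ 2 = 2 * Real.pi := Real.sq_sqrt (by positivity)
    have s2 : Real.sqrt t ^ 2 = t := Real.sq_sqrt ht.le
    have s3 : Real.sqrt (Real.pi / (ν * Real.sinh (Real.pi * ν))) ^ 2 =
        Real.pi / (ν * Real.sinh (Real.pi * ν)) := Real.sq_sqrt hGpos.le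
    have s4 : Real.exp (-(Real.pi * ν / 2)) ^ 2 = Real.exp (-(Real.pi * ν)) := by
      rw [sq, ← Real.exp_add]; ring_nf
    rw [div_pow, mul_pow, mul_pow, mul_pow, mul_pow, mul_pow, s1, s2, s3, s4]
    rw [div_eq_div_iff (by positivity) (by positivity)]
    field_simp
    linear_combination hsinh
  have : L = Real.sqrt (2 * k₁ * ν / t) := by
    rw [← hLsq, Real.sqrt_sq_eq_abs, abs_of_nonneg hLnonneg]
  rw [this, Real.sqrt_div (by positivity) t]
end

section
/- Let k₁ > 0 and let h : ℝ → ℝ be continuously differentiable on (−∞, −k₁] with h(s) → 0 as s → −∞, such that h, h′, and s ↦ log(2 + |s|)·h′(s) are Lebesgue integrable on (−∞, −k₁]. Then for every k ∈ ℂ not on the ray {z : Im z = 0, Re z ≤ −k₁}, (1/(2πi)) ∫_{−∞}^{−k₁} h(s)/(s − k) ds = (h(−k₁)/(2πi))·Log(k + k₁) − (1/(2πi)) ∫_{−∞}^{−k₁} Log(k − s)·h′(s) ds, where Log denotes the principal branch of the complex logarithm. Equivalently, δ_h(k) = exp(iν·Log(k + k₁))·exp(−χ(k)) with ν = −h(−k₁)/(2π)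 and χ(k) = (1/(2πi)) ∫_{−∞}^{−k₁} Log(k − s)·h′(s) ds. -/
open MeasureTheory

/-- Norm bound for the principal complex logarithm. -/
lemma aux_norm_clog_le (z : ℂ) :
    ‖Complex.log z‖ ≤ |Real.log (‖z‖)| + Real.pi := by
  rw [Complex.log]
  refine (norm_add_le _ _).trans ?_
  have h1 : ‖((Real.log (‖z‖) : ℝ) : ℂ)‖ = |Real.log (‖z‖)| := by
    simp [Complex.norm_real]
  have h2 : ‖((z.arg : ℝ) : ℂ) * Complex.I‖ ≤ Real.pi := by
    rw [norm_mul, Complex.norm_I, mul_one, Complex.norm_real, Real.norm_eq_abs]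
    exact Complex.abs_arg_le_pi z
  rw [h1]
  linarith

/-- Integration-by-parts representation of the scalar Riemann–Hilbert factor:
for `k₁ > 0` and `h` continuously differentiable on `(−∞, −k₁]` with `h → 0` at `−∞`,
such that `h`, `h′` and `s ↦ log(2+|s|)h′(s)` are integrable on `(−∞, −k₁]`, one has,
for every `k` off the ray `{Im z = 0, Re z ≤ −k₁}`,
`(1/(2πi)) ∫_{−∞}^{−k₁} h(s)/(s−k) ds
  = (h(−k₁)/(2πi)) Log(k+k₁) − (1/(2πi)) ∫_{−∞}^{−k₁} Log(k−s) h′(s) ds`,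
with `Log` the principal branch of the complex logarithm. -/
theorem stmt_13 (k₁ : ℝ) (hk₁ : 0 < k₁) (h h' : ℝ → ℝ)
    (hderiv : ∀ s ∈ Set.Iic (-k₁), HasDerivAt h (h' s) s)
    (hcont : ContinuousOn h' (Set.Iic (-k₁)))
    (hlim : Filter.Tendsto h Filter.atBot (nhds 0))
    (hint : IntegrableOn h (Set.Iic (-k₁)))
    (hint' : IntegrableOn h' (Set.Iic (-k₁)))
    (hintlog : IntegrableOn (fun s => Real.log (2 + |s|) * h' s) (Set.Iic (-k₁)))
    (k : ℂ) (hk : ¬(k.im = 0 ∧ k.re ≤ -k₁)) :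
    (1 / (2 * (Real.pi : ℂ) * Complex.I)) *
        ∫ s in Set.Iic (-k₁), ((h s : ℝ) : ℂ) / ((s : ℂ) - k) =
      (((h (-k₁) : ℝ) : ℂ) / (2 * (Real.pi : ℂ) * Complex.I)) *
          Complex.log (k + (k₁ : ℂ)) -
        (1 / (2 * (Real.pi : ℂ) * Complex.I)) *
          ∫ s in Set.Iic (-k₁), Complex.log (k - (s : ℂ)) * ((h' s : ℝ) : ℂ) := by
  -- the point k - s stays in the slit plane
  have hne : ∀ s : ℝ, s ≤ -k₁ → k - (s : ℂ) ∈ Complex.slitPlane := by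
    intro s hs
    rcases eq_or_ne k.im 0 with him | him
    · left
      have : -k₁ < k.re := by
        by_contra hre
        exact hk ⟨him, le_of_not_gt hre⟩
      simp only [Complex.sub_re, Complex.ofReal_re]
      linarith
    · right
      simpa [Complex.sub_im] using him
  -- uniform distance from the ray
  obtain ⟨d, hd0, hd⟩ : ∃ d > 0, ∀ s : ℝ, s ≤ -k₁ → d ≤ ‖k - s‖ := by
    rcases eq_or_ne k.im 0 with him | him
    · have hre : -k₁ < k.re := by
        by_contra hre
        exact hk ⟨him, le_of_not_gt hre⟩
      refine ⟨k.re + k₁, by linarith, fun s hs => ?_⟩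
      have h1 : k.re + k₁ ≤ (k - (s : ℂ)).re := by
        simp only [Complex.sub_re, Complex.ofReal_re]; linarith
      calc k.re + k₁ ≤ (k - (s : ℂ)).re := h1
        _ ≤ |(k - (s : ℂ)).re| := le_abs_self _
        _ ≤ ‖k - s‖ := Complex.abs_re_le_norm _
    · refine ⟨|k.im|, abs_pos.2 him, fun s hs => ?_⟩
      have : |(k - (s : ℂ)).im| ≤ ‖k - s‖ := Complex.abs_im_le_norm _
      simpa [Complex.sub_im] using this
  have hdne : ∀ s : ℝ, s ≤ -k₁ → (s : ℂ) - k ≠ 0 := by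
    intro s hs hz
    have h0 : k - (s : ℂ) = 0 := by rw [← neg_eq_zero, neg_sub]; exact hz
    have := hd s hs
    rw [h0] at this
    simp at this
    linarith
  -- pointwise bound on the logarithm
  set C : ℝ := |Real.log d| + Real.log (2 + ‖k‖) + Real.pi with hC
  have hlogb : ∀ s : ℝ, s ≤ -k₁ → ‖Complex.log (k - s)‖ ≤ C + Real.log (2 + |s|) := by
    intro s hs
    have hb := aux_norm_clog_le (k - s)
    have hr0 : 0 < ‖k - s‖ := lt_of_lt_of_le hd0 (hd s hs)
    have hld : Real.log d ≤ Real.log (‖k - s‖) := Real.log_le_log hd0 (hd s hs)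
    have hub : ‖k - s‖ ≤ (2 + ‖k‖) * (2 + |s|) := by
      have h1 : ‖k - s‖ ≤ ‖k‖ + |s| := by
        simpa [Complex.norm_real] using (norm_sub_le k (s : ℂ))
      nlinarith [norm_nonneg k, abs_nonneg s]
    have hlu : Real.log (‖k - s‖) ≤
        Real.log (2 + ‖k‖) + Real.log (2 + |s|) := by
      calc Real.log (‖k - s‖) ≤ Real.log ((2 + ‖k‖) * (2 + |s|)) :=
            Real.log_le_log hr0 hub
        _ = Real.log (2 + ‖k‖) + Real.log (2 + |s|) := by
            rw [Real.log_mul (by positivity) (by positivity)]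
    have h1 : (0:ℝ) ≤ Real.log (2 + ‖k‖) := by
      apply Real.log_nonneg; nlinarith [norm_nonneg k]
    have h2 : (0:ℝ) ≤ Real.log (2 + |s|) := by
      apply Real.log_nonneg; nlinarith [abs_nonneg s]
    have h3 : -|Real.log d| ≤ Real.log d := neg_abs_le _
    have h4 : |Real.log (‖k - s‖)| ≤
        |Real.log d| + Real.log (2 + ‖k‖) + Real.log (2 + |s|) := by
      rw [abs_le]
      constructor <;> [linarith; linarith [le_abs_self (Real.log d)]]
    rw [hC]; linarith
  -- derivative of the primitive
  have hlogd : ∀ s : ℝ, s ≤ -k₁ →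
      HasDerivAt (fun s : ℝ => Complex.log (k - s)) (((s : ℂ) - k)⁻¹) s := by
    intro s hs
    have h1 : HasDerivAt (fun z : ℂ => Complex.log (k - z)) ((k - (s : ℂ))⁻¹ * (-1)) (s : ℂ) :=
      (Complex.hasDerivAt_log (hne s hs)).comp (s : ℂ) ((hasDerivAt_id (s : ℂ)).const_sub k)
    have h2 := h1.comp_ofReal
    have h3 : (k - (s : ℂ))⁻¹ * (-1) = ((s : ℂ) - k)⁻¹ := by
      rw [mul_neg_one, ← inv_neg, neg_sub]
    rw [h3] at h2
    exact h2
  have hF'deriv : ∀ s ∈ Set.Iic (-k₁),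
      HasDerivAt (fun s : ℝ => Complex.log (k - s) * ((h s : ℝ) : ℂ))
        (((h s : ℝ) : ℂ) / ((s : ℂ) - k) + Complex.log (k - s) * ((h' s : ℝ) : ℂ)) s := by
    intro s hs
    have := (hlogd s hs).mul ((hderiv s hs).ofReal_comp)
    refine this.congr_deriv ?_
    rw [div_eq_mul_inv]
    ring
  -- integrability of the two parts
  have habs_eq : ∀ s : ℝ, ‖(s : ℂ) - k‖ = ‖k - s‖ := by
    intro s; rw [← norm_neg, neg_sub]
  have hint1 : IntegrableOn (fun s : ℝ => ((h s : ℝ) : ℂ) / ((s : ℂ) - k)) (Set.Iic (-k₁)) := by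
    have hm : AEStronglyMeasurable (fun s : ℝ => ((h s : ℝ) : ℂ) / ((s : ℂ) - k))
        (volume.restrict (Set.Iic (-k₁))) := by
      have hm2 : Measurable fun s : ℝ => ((s : ℂ) - k)⁻¹ :=
        (Complex.measurable_ofReal.sub measurable_const).inv
      simp only [div_eq_mul_inv]
      exact hint.ofReal.aestronglyMeasurable.mul hm2.aestronglyMeasurable
    refine Integrable.mono' (hint.norm.const_mul d⁻¹) hm ?_
    filter_upwards [ae_restrict_mem measurableSet_Iic] with s hs
    rw [norm_div]
    have hds : d ≤ ‖(s : ℂ) - k‖ := by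
      rw [show ‖(s : ℂ) - k‖ = ‖(s : ℂ) - k‖ from rfl, habs_eq]
      exact hd s hs
    have : ‖((h s : ℝ) : ℂ)‖ = ‖h s‖ := by simp [Complex.norm_real]
    rw [this]
    rw [div_le_iff₀ (lt_of_lt_of_le hd0 hds)]
    calc d⁻¹ * ‖h s‖ * ‖(s : ℂ) - k‖ = ‖h s‖ * (d⁻¹ * ‖(s : ℂ) - k‖) := by ring
      _ ≥ ‖h s‖ * 1 := by
          gcongr _ * ?_
          rw [le_inv_mul_iff₀ hd0, mul_one]
          exact hds
      _ = ‖h s‖ := mul_one _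
  -- continuity of the log factor on the half-line
  have hclog : ContinuousOn (fun s : ℝ => Complex.log (k - s)) (Set.Iic (-k₁)) := by
    intro s hs
    have hcont2 : ContinuousAt (fun s : ℝ => k - (s : ℂ)) s := by fun_prop
    exact (ContinuousAt.comp (x := s) (g := Complex.log) (f := fun s : ℝ => k - (s : ℂ))
      (continuousAt_clog (hne s hs)) hcont2).continuousWithinAt
  -- norm identity for the weighted integrand
  have hGnorm : ∀ s : ℝ, ‖Real.log (2 + |s|) * h' s‖ = Real.log (2 + |s|) * |h' s| := by
    intro s
    rw [Real.norm_eq_abs, abs_mul, abs_of_nonneg (Real.log_nonneg (by nlinarith [abs_nonneg s]))]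
  have hG : IntegrableOn (fun t : ℝ => Real.log (2 + |t|) * |h' t|) (Set.Iic (-k₁)) := by
    have := hintlog.norm
    simpa only [hGnorm, IntegrableOn] using this
  have hint2 : IntegrableOn (fun s : ℝ => Complex.log (k - s) * ((h' s : ℝ) : ℂ))
      (Set.Iic (-k₁)) := by
    have hm : AEStronglyMeasurable (fun s : ℝ => Complex.log (k - s) * ((h' s : ℝ) : ℂ))
        (volume.restrict (Set.Iic (-k₁))) :=
      (hclog.aestronglyMeasurable measurableSet_Iic).mul hint'.ofReal.aestronglyMeasurable
    refine Integrable.mono' ((hint'.norm.const_mul C).add hG) hm ?_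
    filter_upwards [ae_restrict_mem measurableSet_Iic] with s hs
    rw [norm_mul]
    have h1 : ‖((h' s : ℝ) : ℂ)‖ = |h' s| := by simp [Complex.norm_real]
    rw [h1]
    have h2 := hlogb s hs
    have h3 : (0:ℝ) ≤ |h' s| := abs_nonneg _
    have h4 := mul_le_mul_of_nonneg_right h2 h3
    simp only [Pi.add_apply, Real.norm_eq_abs]
    nlinarith
  -- representation of h as integral of h'
  have hrepr : ∀ s : ℝ, s ≤ -k₁ → h s = ∫ t in Set.Iic s, h' t := by
    intro s hs
    have := integral_Iic_of_hasDerivAt_of_tendsto' (a := s) (f := h) (f' := h')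
      (fun x hx => hderiv x (le_trans hx hs))
      (hint'.mono (Set.Iic_subset_Iic.2 hs) le_rfl) hlim
    rw [this, sub_zero]
  -- the tail integrals of the weighted density tend to 0
  have htail : Filter.Tendsto (fun s : ℝ => ∫ t in Set.Iic s, Real.log (2 + |t|) * |h' t|)
      Filter.atBot (nhds 0) := by
    have hIt := intervalIntegral_tendsto_integral_Iic (-k₁) hG Filter.tendsto_id
    have heq : ∀ᶠ s in Filter.atBot, (∫ t in Set.Iic (-k₁), Real.log (2 + |t|) * |h' t|)
        - ∫ t in s..(-k₁), Real.log (2 + |t|) * |h' t|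
        = ∫ t in Set.Iic s, Real.log (2 + |t|) * |h' t| := by
      filter_upwards [Filter.Iic_mem_atBot (-k₁)] with s hs
      have hs' : s ≤ -k₁ := hs
      rw [intervalIntegral.integral_of_le hs', sub_eq_iff_eq_add]
      calc (∫ t in Set.Iic (-k₁), Real.log (2 + |t|) * |h' t|)
          = ∫ t in Set.Iic s ∪ Set.Ioc s (-k₁), Real.log (2 + |t|) * |h' t| := by
            rw [Set.Iic_union_Ioc_eq_Iic hs']
        _ = (∫ t in Set.Iic s, Real.log (2 + |t|) * |h' t|)
            + ∫ t in Set.Ioc s (-k₁), Real.log (2 + |t|) * |h' t| :=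
          setIntegral_union
            (show Disjoint (Set.Iic s) (Set.Ioc s (-k₁)) from Set.Iic_disjoint_Ioc le_rfl)
            measurableSet_Ioc
            (hG.mono (Set.Iic_subset_Iic.2 hs') le_rfl)
            (hG.mono Set.Ioc_subset_Iic_self le_rfl)
    have h0 : Filter.Tendsto
        (fun s : ℝ => (∫ t in Set.Iic (-k₁), Real.log (2 + |t|) * |h' t|)
          - ∫ t in s..(-k₁), Real.log (2 + |t|) * |h' t|) Filter.atBot
        (nhds ((∫ t in Set.Iic (-k₁), Real.log (2 + |t|) * |h' t|)
          - ∫ t in Set.Iic (-k₁), Real.log (2 + |t|) * |h' t|)) :=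
      Filter.Tendsto.sub tendsto_const_nhds hIt
    rw [sub_self] at h0
    exact Filter.Tendsto.congr' heq h0
  -- the boundary term at -infinity vanishes
  have hFlim : Filter.Tendsto (fun s : ℝ => Complex.log (k - s) * ((h s : ℝ) : ℂ))
      Filter.atBot (nhds 0) := by
    apply squeeze_zero_norm' (a := fun s : ℝ =>
      C * |h s| + ∫ t in Set.Iic s, Real.log (2 + |t|) * |h' t|)
    · filter_upwards [Filter.Iic_mem_atBot (-k₁)] with s hs
      have hs' : s ≤ -k₁ := hs
      have hL0 : (0:ℝ) ≤ Real.log (2 + |s|) :=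
        Real.log_nonneg (by nlinarith [abs_nonneg s])
      have h1 : ‖Complex.log (k - s) * ((h s : ℝ) : ℂ)‖ ≤ (C + Real.log (2 + |s|)) * |h s| := by
        rw [norm_mul]
        have : ‖((h s : ℝ) : ℂ)‖ = |h s| := by simp [Complex.norm_real]
        rw [this]
        exact mul_le_mul_of_nonneg_right (hlogb s hs') (abs_nonneg _)
      have h2 : |h s| ≤ ∫ t in Set.Iic s, |h' t| := by
        rw [hrepr s hs']
        have := norm_integral_le_integral_norm (μ := volume.restrict (Set.Iic s)) h'
        simpa [Real.norm_eq_abs] using this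
      have hIint : IntegrableOn (fun t => |h' t|) (Set.Iic s) :=
        IntegrableOn.mono (s := Set.Iic s) hint'.norm (Set.Iic_subset_Iic.2 hs') le_rfl
      have h3 : Real.log (2 + |s|) * |h s| ≤ ∫ t in Set.Iic s, Real.log (2 + |t|) * |h' t| := by
        calc Real.log (2 + |s|) * |h s| ≤ Real.log (2 + |s|) * ∫ t in Set.Iic s, |h' t| :=
              mul_le_mul_of_nonneg_left h2 hL0
          _ = ∫ t in Set.Iic s, Real.log (2 + |s|) * |h' t| := by
              rw [integral_const_mul]
          _ ≤ ∫ t in Set.Iic s, Real.log (2 + |t|) * |h' t| := by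
              apply setIntegral_mono_on (hIint.const_mul _)
                (hG.mono (Set.Iic_subset_Iic.2 hs') le_rfl) measurableSet_Iic
              intro t ht
              have ht' : t ≤ s := ht
              have habs : |s| ≤ |t| := by
                rw [abs_of_nonpos (by linarith), abs_of_nonpos (by linarith)]
                linarith
              exact mul_le_mul_of_nonneg_right
                (Real.log_le_log (by positivity) (by linarith)) (abs_nonneg _)
      have hC0 : (0:ℝ) ≤ C := by
        rw [hC]
        have := Real.pi_pos
        have := abs_nonneg (Real.log d)
        have : (0:ℝ) ≤ Real.log (2 + ‖k‖) :=
          Real.log_nonneg (by nlinarith [norm_nonneg k])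
        positivity
      nlinarith [abs_nonneg (h s)]
    · have l1 : Filter.Tendsto (fun s : ℝ => C * |h s|) Filter.atBot (nhds 0) := by
        have := (hlim.abs).const_mul C
        simpa using this
      have := l1.add htail
      simpa using this
  -- integration by parts
  have key := integral_Iic_of_hasDerivAt_of_tendsto' hF'deriv (hint1.add hint2) hFlim
  rw [integral_add hint1 hint2] at key
  have hka : k - (((-k₁ : ℝ) : ℝ) : ℂ) = k + (k₁ : ℂ) := by push_cast; ring
  rw [hka, sub_zero] at key
  linear_combination ((1 : ℂ) / (2 * (Real.pi : ℂ) * Complex.I)) * key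
end
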